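/- arXiv:1010.0178 — 5 statements merged into one kernel-verified Lean document; each statement's English description precedes it below -/
import Mathlib

section
/- For every natural number a ≥ 0 and every odd natural number v, the binomial coefficient C(2^a · v, 2^a) is odd; consequently 2^a is the minimal positive u with C(2^a · v, u) odd. -/
/-! By Lucas' theorem `choose (2 ^ a * v) (2 ^ a) ≡ choose v 1 = v (mod 2)`. For minimality,
Lucas at the last base-`p` digit gives `choose (p * n) k ≡ choose 0 (k % p) * choose n (k / p)`,
so `p ∤ choose (p * n) k` forces `p ∣ k` and `p ∤ choose n (k / p)`; iterating `a` times,
`p ∤ choose (p ^ a * m) k` forces `p ^ a ∣ k`. -/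

namespace Choose

variable {p : ℕ} [Fact p.Prime]

theorem dvd_and_not_dvd_choose_div_of_not_dvd_choose_mul {n k : ℕ}
    (h : ¬ p ∣ (p * n).choose k) : p ∣ k ∧ ¬ p ∣ n.choose (k / p) := by
  have hp : 0 < p := (Fact.out : p.Prime).pos
  have hlucas := choose_modEq_choose_mod_mul_choose_div_nat (n := p * n) (k := k) (p := p)
  rw [Nat.mul_mod_right, Nat.mul_div_cancel_left n hp] at hlucas
  by_cases hk : k % p = 0
  · refine ⟨Nat.dvd_of_mod_eq_zero hk, fun hn => h ?_⟩
    rw [hk, Nat.choose_zero_right, one_mul] at hlucas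
    exact Nat.modEq_zero_iff_dvd.mp (hlucas.trans (Nat.modEq_zero_iff_dvd.mpr hn))
  · rw [Nat.choose_eq_zero_of_lt (Nat.pos_of_ne_zero hk), zero_mul] at hlucas
    exact absurd (Nat.modEq_zero_iff_dvd.mp hlucas) h

theorem pow_dvd_of_not_dvd_choose_pow_mul {a m k : ℕ} (h : ¬ p ∣ (p ^ a * m).choose k) :
    p ^ a ∣ k := by
  induction a generalizing k with
  | zero => exact one_dvd k
  | succ a ih =>
    rw [pow_succ', mul_assoc] at h
    obtain ⟨⟨j, rfl⟩, hj⟩ := dvd_and_not_dvd_choose_div_of_not_dvd_choose_mul h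
    rw [Nat.mul_div_cancel_left j (Fact.out : p.Prime).pos] at hj
    rw [pow_succ']
    exact Nat.mul_dvd_mul_left p (ih hj)

end Choose

theorem choose_two_pow_odd (a v : ℕ) (hv : Odd v) :
    Odd (Nat.choose (2 ^ a * v) (2 ^ a)) ∧
      IsLeast {u : ℕ | 0 < u ∧ Odd (Nat.choose (2 ^ a * v) u)} (2 ^ a) := by
  have hodd : Odd (Nat.choose (2 ^ a * v) (2 ^ a)) := by
    have h := Choose.choose_pow_mul_pow_mul_modEq_choose_nat (p := 2) (k := a) (a := v) (b := 1)
    rw [mul_one, Nat.choose_one_right] at h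
    exact Nat.odd_iff.mpr (Eq.trans h (Nat.odd_iff.mp hv))
  refine ⟨hodd, ⟨pow_pos two_pos a, hodd⟩, ?_⟩
  rintro u ⟨hu, hodd_u⟩
  exact Nat.le_of_dvd hu
    (Choose.pow_dvd_of_not_dvd_choose_pow_mul (Nat.two_dvd_ne_zero.mpr (Nat.odd_iff.mp hodd_u)))
end

section
/- Let n ≥ 1, j ≥ 0, k ≥ 0 be integers with 4k + 2j + 3 < 2n. Then in F_2[X]/(X^{2n}) the element X^{2(2k+1)} does not lie in the F_2-linear span of the set {(X² + X^{2j+3})^m : 1 ≤ m ≤ n−1}. -/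
/-!
Write `g = X² + X^(2j+3) = X² (1 + X^(2j+1))`, so `g^m = X^(2m) (1 + X^(2j+1))^m`. If a combination
`p = ∑ c_m g^m` has smallest index `m₀` with `c_m₀ ≠ 0`, then the coefficient of `p` at `X^(2m₀)` is
`c_m₀`, and at `X^(2m₀ + 2j + 1)` it is `m₀ c_m₀`: no `g^m` with `m > m₀` reaches that odd exponent,
because `(1 + X^(2j+1))^m` only has exponents divisible by `2j + 1`. If `p ≡ X^(4k+2)` modulo
`X^(2n)`, the first coefficient forces `m₀ = 2k + 1`, which is odd, so the coefficient of `p` at the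
odd exponent `4k + 2j + 3 < 2n` is nonzero, a contradiction.
-/

open Polynomial

namespace Polynomial

variable {R : Type*}

section CommSemiring

variable [CommSemiring R] {b : ℕ}

theorem coeff_one_add_X_pow_pow (hb : 0 < b) (m d : ℕ) :
    ((1 + X ^ b : R[X]) ^ m).coeff d = if b ∣ d then (m.choose (d / b) : R) else 0 := by
  rw [← coeff_one_add_X_pow R m, ← coeff_expand hb, map_pow, map_add, map_one, expand_X]

theorem coeff_X_sq_mul_one_add_X_pow_pow_two_mul {m₀ m : ℕ} (hb : 0 < b) (hm : m₀ ≤ m) :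
    ((X ^ 2 * (1 + X ^ b) : R[X]) ^ m).coeff (2 * m₀) = if m = m₀ then 1 else 0 := by
  rw [mul_pow, ← pow_mul, coeff_X_pow_mul']
  split_ifs with h₁ h₂ h₂
  · subst h₂
    simp [coeff_one_add_X_pow_pow hb]
  · omega
  · omega
  · rfl

theorem coeff_X_sq_mul_one_add_X_pow_pow_two_mul_add {m₀ m : ℕ} (hb : Odd b) (hm : m₀ ≤ m) :
    ((X ^ 2 * (1 + X ^ b) : R[X]) ^ m).coeff (2 * m₀ + b) = if m = m₀ then (m₀ : R) else 0 := by
  obtain ⟨i, rfl⟩ := hb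
  rw [mul_pow, ← pow_mul, coeff_X_pow_mul', coeff_one_add_X_pow_pow (by omega)]
  split_ifs with h₁ h₂ h₃ h₃
  · subst h₃
    simp
  · -- `2 * m₀ + b - 2 * m` is odd, hence nonzero, and smaller than `b` unless `m = m₀`
    have := Nat.le_of_dvd (by omega) h₂
    omega
  · subst h₃
    simp at h₂
  · rfl
  · omega
  · rfl

theorem exists_coeff_eq_of_mem_span (hb : Odd b) {S : Set ℕ} {p : R[X]}
    (hp : p ∈ Submodule.span R ((fun m ↦ (X ^ 2 * (1 + X ^ b) : R[X]) ^ m) '' S)) (hp₀ : p ≠ 0) :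
    ∃ m₀ ∈ S, ∃ c ≠ 0, p.coeff (2 * m₀) = c ∧ p.coeff (2 * m₀ + b) = m₀ * c := by
  classical
  obtain ⟨l, hlS, rfl⟩ := Finsupp.mem_span_image_iff_linearCombination R |>.mp hp
  have hl : l.support.Nonempty := by
    rw [Finsupp.support_nonempty_iff]
    rintro rfl
    exact hp₀ (map_zero _)
  set m₀ := l.support.min' hl
  have hm₀ : m₀ ∈ l.support := l.support.min'_mem hl
  have coeff_eq (d : ℕ) (hd : ∀ m ∈ l.support, m ≠ m₀ →
      ((X ^ 2 * (1 + X ^ b) : R[X]) ^ m).coeff d = 0) :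
      (Finsupp.linearCombination R (fun m ↦ (X ^ 2 * (1 + X ^ b) : R[X]) ^ m) l).coeff d =
        l m₀ * ((X ^ 2 * (1 + X ^ b) : R[X]) ^ m₀).coeff d := by
    rw [Finsupp.linearCombination_apply, Finsupp.sum, finsetSum_coeff,
      Finset.sum_eq_single_of_mem m₀ hm₀ fun m hm hne ↦ by rw [coeff_smul, hd m hm hne, smul_zero],
      coeff_smul, smul_eq_mul]
  refine ⟨m₀, hlS hm₀, l m₀, Finsupp.mem_support_iff.mp hm₀, ?_, ?_⟩
  · rw [coeff_eq _ fun m hm hne ↦ ?_, coeff_X_sq_mul_one_add_X_pow_pow_two_mul hb.pos le_rfl,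
      if_pos rfl, mul_one]
    rw [coeff_X_sq_mul_one_add_X_pow_pow_two_mul hb.pos (l.support.min'_le m hm), if_neg hne]
  · rw [coeff_eq _ fun m hm hne ↦ ?_, coeff_X_sq_mul_one_add_X_pow_pow_two_mul_add hb le_rfl,
      if_pos rfl, mul_comm]
    rw [coeff_X_sq_mul_one_add_X_pow_pow_two_mul_add hb (l.support.min'_le m hm), if_neg hne]

end CommSemiring

theorem coeff_eq_of_mk_span_X_pow_eq [CommRing R] {N d : ℕ} {p q : R[X]}
    (h : Ideal.Quotient.mk (Ideal.span {X ^ N}) p = Ideal.Quotient.mk _ q) (hd : d < N) :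
    p.coeff d = q.coeff d := by
  rw [Ideal.Quotient.eq, Ideal.mem_span_singleton, X_pow_dvd_iff] at h
  simpa [sub_eq_zero] using h d hd

end Polynomial

theorem not_mem_span_general (n j k : ℕ) (h : 4 * k + 2 * j + 3 < 2 * n) :
    Ideal.Quotient.mk (Ideal.span {(Polynomial.X : Polynomial (ZMod 2)) ^ (2 * n)})
        (Polynomial.X ^ (2 * (2 * k + 1))) ∉
      Submodule.span (ZMod 2)
        {y | ∃ m : ℕ, 1 ≤ m ∧ m ≤ n - 1 ∧
          y = (Ideal.Quotient.mk
                (Ideal.span {(Polynomial.X : Polynomial (ZMod 2)) ^ (2 * n)})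
                (Polynomial.X ^ 2 + Polynomial.X ^ (2 * j + 3))) ^ m} := by
  set I := Ideal.span {(X : (ZMod 2)[X]) ^ (2 * n)}
  have hg : (X ^ 2 + X ^ (2 * j + 3) : (ZMod 2)[X]) = X ^ 2 * (1 + X ^ (2 * j + 1)) := by ring
  have hset : {y | ∃ m : ℕ, 1 ≤ m ∧ m ≤ n - 1 ∧ y = Ideal.Quotient.mk I (X ^ 2 + X ^ (2 * j + 3)) ^ m} =
      (Ideal.Quotient.mkₐ (ZMod 2) I).toLinearMap ''
        ((fun m ↦ (X ^ 2 * (1 + X ^ (2 * j + 1)) : (ZMod 2)[X]) ^ m) '' Set.Icc 1 (n - 1)) := by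
    ext y
    simp [hg, eq_comm, and_assoc]
  rw [hset, Submodule.span_image]
  rintro ⟨p, hp, hpX⟩
  have hcoeff (d : ℕ) (hd : d < 2 * n) : p.coeff d = (X ^ (2 * (2 * k + 1))).coeff d :=
    coeff_eq_of_mk_span_X_pow_eq hpX hd
  have hp₀ : p ≠ 0 := by
    rintro rfl
    simpa using hcoeff (2 * (2 * k + 1)) (by omega)
  obtain ⟨m₀, ⟨-, hm₀n⟩, c, hc, h₁, h₂⟩ := exists_coeff_eq_of_mem_span (by simp) hp hp₀
  have hm₀k : m₀ = 2 * k + 1 := by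
    rw [hcoeff _ (by omega), coeff_X_pow] at h₁
    by_contra hne
    exact hc (by rw [← h₁, if_neg (by omega)])
  rw [hcoeff _ (by omega), coeff_X_pow, if_neg (by omega), hm₀k] at h₂
  have hodd : ((2 * k + 1 : ℕ) : ZMod 2) = 1 := by
    rw [Nat.cast_add, Nat.cast_mul, ZMod.natCast_self, zero_mul, zero_add, Nat.cast_one]
  rw [hodd, one_mul] at h₂
  exact hc h₂.symm

theorem not_mem_span (n j k : ℕ) (hn : 1 ≤ n) (h : 4 * k + 2 * j + 3 < 2 * n) :
    Ideal.Quotient.mk (Ideal.span {(Polynomial.X : Polynomial (ZMod 2)) ^ (2 * n)})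
        (Polynomial.X ^ (2 * (2 * k + 1))) ∉
      Submodule.span (ZMod 2)
        {y | ∃ m : ℕ, 1 ≤ m ∧ m ≤ n - 1 ∧
          y = (Ideal.Quotient.mk
                (Ideal.span {(Polynomial.X : Polynomial (ZMod 2)) ^ (2 * n)})
                (Polynomial.X ^ 2 + Polynomial.X ^ (2 * j + 3))) ^ m} :=
  not_mem_span_general n j k h
end

section
/- Let n ≥ 1, j ≥ 0, i ≥ 1, k ≥ 0 be integers with 2^{i+1}·k + (2^{i+1} − 2)·j + (2^{i+1} − 1) ≥ 2n. Then in F_2[X]/(X^{2n}) the element X^{2^i(2k+1)} lies in the F_2-linear span of {(X² + X^{2j+3})^m : 1 ≤ m ≤ n−1}. -/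
/-!
Write `f = X² + X^(a+2) = X²(1 + X^a)`. In characteristic 2 the Frobenius gives
`f^(2^u c) = X^(2^(u+1) c) (1 + X^(2^u a))^c`, so `X^(2^(u+1) c)` equals `f^(2^u c)` plus a
combination of monomials `X^(2^u c')` with `c' = 2c + a s`, `s ≥ 1`. Each of these has one
factor of 2 fewer in its exponent, and the bound `2n + a ≤ 2^u (c + a)` is inherited by
them, so induction on `u` reduces everything to exponents `≥ 2n`, which vanish modulo `X^(2n)`.
-/

open Polynomial

namespace Polynomial

variable {R : Type*} [CommRing R]

theorem mk_X_pow_eq_zero_of_le {N e : ℕ} (h : N ≤ e) :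
    Ideal.Quotient.mk (Ideal.span {(X : R[X]) ^ N}) (X ^ e) = 0 := by
  rw [Ideal.Quotient.eq_zero_iff_mem, Ideal.mem_span_singleton]
  exact pow_dvd_pow X h

theorem X_sq_add_X_pow_pow_two_pow_mul [CharP R 2] (a u c : ℕ) :
    ((X : R[X]) ^ 2 + X ^ (a + 2)) ^ (2 ^ u * c) =
      X ^ (2 ^ (u + 1) * c) +
        ∑ s ∈ Finset.range c,
          c.choose (s + 1) • (X : R[X]) ^ (2 ^ u * (2 * c + a * (s + 1))) := by
  have frobenius : ((1 : R[X]) + X ^ a) ^ 2 ^ u = 1 + X ^ (2 ^ u * a) := by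
    rw [add_pow_char_pow, one_pow, ← pow_mul, mul_comm]
  calc ((X : R[X]) ^ 2 + X ^ (a + 2)) ^ (2 ^ u * c)
      = X ^ (2 ^ (u + 1) * c) * (X ^ (2 ^ u * a) + 1) ^ c := by
        rw [show (X : R[X]) ^ 2 + X ^ (a + 2) = X ^ 2 * (1 + X ^ a) by ring, pow_mul, mul_pow,
          frobenius, mul_pow, ← pow_mul, ← pow_mul, pow_succ', add_comm (1 : R[X]), mul_assoc]
    _ = _ := by
        rw [add_pow, Finset.sum_range_succ', mul_add, Finset.mul_sum, add_comm]
        simp only [one_pow, mul_one, pow_zero, Nat.choose_zero_right, Nat.cast_one]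
        congr 1
        refine Finset.sum_congr rfl fun s _ => ?_
        rw [nsmul_eq_mul, ← pow_mul, ← mul_assoc, ← pow_add]
        ring_nf

variable (R) in
noncomputable def spanPowers (n : ℕ) (f : R[X]) :
    Submodule R (R[X] ⧸ Ideal.span {(X : R[X]) ^ (2 * n)}) :=
  Submodule.span R {y | ∃ m : ℕ, 1 ≤ m ∧ m ≤ n - 1 ∧ y = Ideal.Quotient.mk _ f ^ m}

theorem mk_X_pow_mem_spanPowers [CharP R 2] {n a : ℕ} (u c : ℕ) (hc0 : 0 < c)
    (hc : 2 * n + a ≤ 2 ^ u * (c + a)) :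
    Ideal.Quotient.mk _ (X ^ (2 ^ u * c)) ∈ spanPowers R n (X ^ 2 + X ^ (a + 2)) := by
  induction u generalizing c with
  | zero =>
    rw [mk_X_pow_eq_zero_of_le (by omega)]
    exact zero_mem _
  | succ u ih =>
    by_cases hvanish : 2 * n ≤ 2 ^ (u + 1) * c
    · rw [mk_X_pow_eq_zero_of_le hvanish]
      exact zero_mem _
    have hpow : Ideal.Quotient.mk _ (X ^ 2 + X ^ (a + 2)) ^ (2 ^ u * c) ∈
        spanPowers R n (X ^ 2 + X ^ (a + 2)) :=
      Submodule.subset_span ⟨2 ^ u * c, Nat.mul_pos (Nat.two_pow_pos u) hc0,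
        by rw [pow_succ', mul_assoc] at hvanish; omega, rfl⟩
    have htail : ∀ s : ℕ, Ideal.Quotient.mk _ (X ^ (2 ^ u * (2 * c + a * (s + 1)))) ∈
        spanPowers R n (X ^ 2 + X ^ (a + 2)) := fun s =>
      ih _ (by omega) <| calc
        2 * n + a ≤ 2 ^ u * (2 * (c + a)) := by rwa [pow_succ, mul_assoc] at hc
        _ ≤ 2 ^ u * (2 * c + a * (s + 1) + a) := by gcongr; nlinarith
    rw [← map_pow, X_sq_add_X_pow_pow_two_pow_mul, map_add, map_sum] at hpow
    refine (Submodule.add_mem_iff_left _ (Submodule.sum_mem _ fun s _ => ?_)).mp hpow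
    rw [map_nsmul]
    exact Submodule.smul_of_tower_mem _ _ (htail s)

end Polynomial

theorem mem_span_general (n j i k : ℕ)
    (h : 2 * n ≤ 2 ^ (i + 1) * k + (2 ^ (i + 1) - 2) * j + (2 ^ (i + 1) - 1)) :
    Ideal.Quotient.mk (Ideal.span {(Polynomial.X : Polynomial (ZMod 2)) ^ (2 * n)})
        (Polynomial.X ^ (2 ^ i * (2 * k + 1))) ∈
      Submodule.span (ZMod 2)
        {y | ∃ m : ℕ, 1 ≤ m ∧ m ≤ n - 1 ∧
          y = (Ideal.Quotient.mk
                (Ideal.span {(Polynomial.X : Polynomial (ZMod 2)) ^ (2 * n)})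
                (Polynomial.X ^ 2 + Polynomial.X ^ (2 * j + 3))) ^ m} := by
  have hbound : 2 * n + (2 * j + 1) ≤ 2 ^ i * (2 * k + 1 + (2 * j + 1)) := by
    have : 2 ≤ 2 ^ (i + 1) := Nat.le_self_pow (by omega) 2
    rw [pow_succ] at h this
    zify [this, (by omega : 1 ≤ 2 ^ i * 2)] at h ⊢
    linarith
  exact mk_X_pow_mem_spanPowers (a := 2 * j + 1) i _ (by omega) hbound

theorem mem_span (n j i k : ℕ) (hn : 1 ≤ n) (hi : 1 ≤ i)
    (h : 2 * n ≤ 2 ^ (i + 1) * k + (2 ^ (i + 1) - 2) * j + (2 ^ (i + 1) - 1)) :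
    Ideal.Quotient.mk (Ideal.span {(Polynomial.X : Polynomial (ZMod 2)) ^ (2 * n)})
        (Polynomial.X ^ (2 ^ i * (2 * k + 1))) ∈
      Submodule.span (ZMod 2)
        {y | ∃ m : ℕ, 1 ≤ m ∧ m ≤ n - 1 ∧
          y = (Ideal.Quotient.mk
                (Ideal.span {(Polynomial.X : Polynomial (ZMod 2)) ^ (2 * n)})
                (Polynomial.X ^ 2 + Polynomial.X ^ (2 * j + 3))) ^ m} :=
  mem_span_general n j i k h
end

section
/- Let n ≥ 1, j ≥ 0, i ≥ 1. Define V ⊆ F_2[X]/(X^{2n}) as the span of {X^{2k+1} : 0 ≤ k ≤ n−1} and U as the span of {(X²+X^{2j+3})^m : 1 ≤ m ≤ n−1}. Then the F_2-dimension of {f ∈ V : f^{2^i} ∈ U} equals n − max(⌈(2n − (2^{i+1}−2)j − (2^{i+1}−1))/2^{i+1}⌉, 0). -/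
/-!
Put `ξ = X` and `η = X² + X^(2j+3)` in `𝔸 = K[X]/(X^N)`, `K` of characteristic two. Since
`η = ξ² (1 + ξ^(2j+1))`, the elements `ξ^(d % 2) η^(d / 2)` agree with `ξ^d` up to higher order
terms, so they form a basis and `𝔸 = K[η] ⊕ ξ K[η]`; let `oddPart` be the projection onto the
second summand. Then `U = truncYSpan` is `{g | oddPart g = 0 ∧ ξ ∣ g}`. Writing `g = e + o`
and using `ξ² = η + ξ^(2j+3)`, one gets `oddPart (g²) = oddPart (ξ^(2j+1) (oddPart g)²)`, so by
induction `oddPart (ξ^(2^a s))`, `s` odd, has leading term `ξ^w`, `w = 2^a (s + 2j + 1) - (2j + 1)`.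
For `f = ∑ a_k ξ^(2k+1)` these leading exponents are distinct for distinct `k`, hence
`f^(2^i) ∈ U` iff `a_k = 0` for every `k` whose exponent lies below `N = 2n`; counting those `k`
gives the ceiling.
-/

open Polynomial Module

theorem IsNilpotent.pow_eq_zero_of_pow_succ_dvd {R : Type*} [CommRing R] {x : R}
    (hx : IsNilpotent x) {m : ℕ} (h : x ^ (m + 1) ∣ x ^ m) : x ^ m = 0 := by
  obtain ⟨z, hz⟩ := h
  have hunit : IsUnit (1 - x * z) := ((Commute.all x z).isNilpotent_mul_right hx).isUnit_one_sub
  refine (hunit.mul_left_eq_zero).mp ?_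
  rw [mul_sub, mul_one, ← mul_assoc, ← _root_.pow_succ, ← hz, sub_self]

theorem pow_dvd_of_pow_succ_dvd_sub {R : Type*} [CommRing R] {x g : R} {m : ℕ}
    (h : x ^ (m + 1) ∣ g - x ^ m) : x ^ m ∣ g := by
  simpa using dvd_add ((pow_dvd_pow x m.le_succ).trans h) (dvd_refl (x ^ m))

section Triangular

variable {K A ι : Type*} [Field K] [CommRing A] [Algebra K A] {x : A} {e : ι → ℕ} {b : ι → A}

theorem coeff_eq_zero_of_pow_dvd_sum (hx : IsNilpotent x) (he : Function.Injective e)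
    (hb : ∀ d, x ^ (e d + 1) ∣ b d - x ^ e d) {s : Finset ι} {c : ι → K} {k : ℕ}
    (h : x ^ k ∣ ∑ d ∈ s, c d • b d) {d : ι} (hd : d ∈ s) (hdk : e d < k)
    (hxd : x ^ e d ≠ 0) : c d = 0 := by
  classical
  induction hm : e d using Nat.strong_induction_on generalizing d with
  | _ m ih =>
    subst hm
    have hrest : x ^ (e d + 1) ∣ ∑ d' ∈ s.erase d, c d' • b d' := by
      refine Finset.dvd_sum fun d' hd' => ?_
      obtain ⟨hne, hd's⟩ := Finset.mem_erase.mp hd'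
      rcases lt_or_gt_of_ne (he.ne hne) with hlt | hgt
      · rw [ih _ hlt hd's (hlt.trans hdk) (fun h0 => hxd (pow_eq_zero_of_le hlt.le h0)) rfl,
          zero_smul]
        exact dvd_zero _
      · exact dvd_smul_of_dvd _ ((pow_dvd_pow x hgt).trans (pow_dvd_of_pow_succ_dvd_sub (hb d')))
    have hlead : x ^ (e d + 1) ∣ c d • x ^ e d := by
      have hsum := (pow_dvd_pow x hdk).trans h
      rw [← Finset.add_sum_erase s _ hd] at hsum
      have := dvd_sub (dvd_sub hsum hrest) ((hb d).mul_left (algebraMap K A (c d)))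
      rwa [add_sub_cancel_right, ← Algebra.smul_def, ← smul_sub, sub_sub_cancel] at this
    by_contra hc
    refine hxd (hx.pow_eq_zero_of_pow_succ_dvd ?_)
    have := hlead.mul_left (algebraMap K A (c d)⁻¹)
    rwa [← Algebra.smul_def, inv_smul_smul₀ hc] at this

theorem linearIndependent_of_pow_succ_dvd_sub (hx : IsNilpotent x) (he : Function.Injective e)
    (hb : ∀ d, x ^ (e d + 1) ∣ b d - x ^ e d) (hne : ∀ d, x ^ e d ≠ 0) :
    LinearIndependent K b := by
  rw [linearIndependent_iff']
  intro s c hs d hd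
  exact coeff_eq_zero_of_pow_dvd_sum hx he hb (hs ▸ dvd_zero _) hd (Nat.lt_succ_self _) (hne d)

end Triangular

section Truncated

variable (K : Type*) [Field K] (N j : ℕ)

local notation "𝔸" => K[X] ⧸ Ideal.span {(X : K[X]) ^ N}
local notation "ξ" => Ideal.Quotient.mk (Ideal.span {(X : K[X]) ^ N}) X
local notation "η" => Ideal.Quotient.mk (Ideal.span {(X : K[X]) ^ N}) (X ^ 2 + X ^ (2 * j + 3))

theorem truncX_pow_eq_zero_iff {d : ℕ} : (ξ : 𝔸) ^ d = 0 ↔ N ≤ d := by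
  rw [← map_pow, Ideal.Quotient.eq_zero_iff_mem, Ideal.mem_span_singleton,
    pow_dvd_pow_iff X_ne_zero not_isUnit_X]

theorem isNilpotent_truncX : IsNilpotent (ξ : 𝔸) :=
  ⟨N, (truncX_pow_eq_zero_iff K N).mpr le_rfl⟩

theorem charP_trunc [CharP K 2] (hN : 0 < N) : CharP 𝔸 2 :=
  have : Nontrivial 𝔸 :=
    nontrivial_of_ne 1 0 (by simpa using (truncX_pow_eq_zero_iff K N (d := 0)).not.mpr (by omega))
  charP_of_injective_algebraMap (algebraMap K 𝔸).injective 2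

theorem truncY_eq : (η : 𝔸) = ξ ^ 2 * (1 + ξ ^ (2 * j + 1)) := by
  simp only [map_add, map_pow]
  ring

theorem truncX_dvd_truncY : (ξ : 𝔸) ∣ η :=
  ⟨ξ * (1 + ξ ^ (2 * j + 1)), by rw [truncY_eq]; ring⟩

noncomputable def xyMonomial (d : ℕ) : 𝔸 := ξ ^ (d % 2) * η ^ (d / 2)

theorem xyMonomial_two_mul (m : ℕ) : xyMonomial K N j (2 * m) = (η : 𝔸) ^ m := by
  simp [xyMonomial]

theorem xyMonomial_two_mul_add_one (m : ℕ) : xyMonomial K N j (2 * m + 1) = (ξ : 𝔸) * η ^ m := by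
  simp [xyMonomial, Nat.add_mod, Nat.add_div]

theorem pow_succ_dvd_xyMonomial_sub (d : ℕ) :
    (ξ : 𝔸) ^ (d + 1) ∣ xyMonomial K N j d - ξ ^ d := by
  have hu : (ξ : 𝔸) ∣ (1 + ξ ^ (2 * j + 1)) ^ (d / 2) - 1 := by
    have := sub_dvd_pow_sub_pow (1 + (ξ : 𝔸) ^ (2 * j + 1)) 1 (d / 2)
    rw [one_pow, add_sub_cancel_left] at this
    exact (dvd_pow_self _ (by omega)).trans this
  have : xyMonomial K N j d - ξ ^ d = ξ ^ d * ((1 + ξ ^ (2 * j + 1)) ^ (d / 2) - 1) := by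
    rw [xyMonomial, truncY_eq K N j, mul_pow, ← pow_mul, ← mul_assoc, ← pow_add, Nat.mod_add_div]
    ring
  rw [this, _root_.pow_succ]
  exact mul_dvd_mul_left _ hu

theorem xyMonomial_eq_zero {d : ℕ} (hd : N ≤ d) : xyMonomial K N j d = 0 := by
  have := pow_dvd_of_pow_succ_dvd_sub (pow_succ_dvd_xyMonomial_sub K N j d)
  rwa [(truncX_pow_eq_zero_iff K N).mpr hd, zero_dvd_iff] at this

instance : Module.Finite K 𝔸 := (monic_X_pow N).finite_quotient

noncomputable def xyBasis : Basis (Fin N) K 𝔸 :=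
  basisOfLinearIndependentOfCardEqFinrank' (fun d : Fin N => xyMonomial K N j d)
    (linearIndependent_of_pow_succ_dvd_sub (isNilpotent_truncX K N) Fin.val_injective
      (fun d => pow_succ_dvd_xyMonomial_sub K N j d)
      (fun d => (truncX_pow_eq_zero_iff K N).not.mpr (not_le.mpr d.isLt)))
    (by rw [Fintype.card_fin, finrank_quotient_span_eq_natDegree, natDegree_X_pow])

theorem xyBasis_apply (d : Fin N) : xyBasis K N j d = xyMonomial K N j d := by
  simp [xyBasis]

/-- The projection of `K[η] ⊕ ξ K[η]` onto its second summand. -/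
noncomputable def oddPart : 𝔸 →ₗ[K] 𝔸 :=
  (xyBasis K N j).constr K fun d => if Odd (d : ℕ) then xyMonomial K N j d else 0

theorem oddPart_xyMonomial (d : ℕ) :
    oddPart K N j (xyMonomial K N j d) = if Odd d then xyMonomial K N j d else 0 := by
  rcases lt_or_ge d N with hd | hd
  · rw [← xyBasis_apply K N j ⟨d, hd⟩, oddPart, Basis.constr_basis, xyBasis_apply]
  · simp [xyMonomial_eq_zero K N j hd]

theorem oddPart_truncY_pow (m : ℕ) : oddPart K N j ((η : 𝔸) ^ m) = 0 := by
  rw [← xyMonomial_two_mul, oddPart_xyMonomial, if_neg (by simp)]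

theorem oddPart_truncX_mul_truncY_pow (m : ℕ) :
    oddPart K N j ((ξ : 𝔸) * η ^ m) = ξ * η ^ m := by
  rw [← xyMonomial_two_mul_add_one, oddPart_xyMonomial, if_pos (by simp)]

theorem oddPart_aeval (p : K[X]) : oddPart K N j (aeval (η : 𝔸) p) = 0 := by
  rw [aeval_eq_sum_range]
  simp only [map_sum, map_smul, oddPart_truncY_pow, smul_zero, Finset.sum_const_zero]

theorem oddPart_truncX_mul_aeval (q : K[X]) :
    oddPart K N j (ξ * aeval (η : 𝔸) q) = ξ * aeval η q := by
  rw [aeval_eq_sum_range, Finset.mul_sum]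
  simp only [map_sum, map_smul, mul_smul_comm, oddPart_truncX_mul_truncY_pow]

theorem oddPart_aeval_add (p q : K[X]) :
    oddPart K N j (aeval (η : 𝔸) p + ξ * aeval η q) = ξ * aeval η q := by
  rw [LinearMap.map_add, oddPart_aeval, oddPart_truncX_mul_aeval, zero_add]

theorem exists_eq_aeval_add (g : 𝔸) : ∃ p q : K[X], g = aeval (η : 𝔸) p + ξ * aeval η q := by
  induction (xyBasis K N j).mem_span g using Submodule.span_induction with
  | mem _ h =>
    obtain ⟨d, rfl⟩ := h
    obtain ⟨m, hm | hm⟩ := Nat.even_or_odd' (d : ℕ)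
    · exact ⟨X ^ m, 0, by simp [xyBasis_apply, hm, xyMonomial_two_mul]⟩
    · exact ⟨0, X ^ m, by simp [xyBasis_apply, hm, xyMonomial_two_mul_add_one]⟩
  | zero => exact ⟨0, 0, by simp⟩
  | add _ _ _ _ h₁ h₂ =>
    obtain ⟨p₁, q₁, rfl⟩ := h₁
    obtain ⟨p₂, q₂, rfl⟩ := h₂
    exact ⟨p₁ + p₂, q₁ + q₂, by simp only [map_add]; ring⟩
  | smul c _ _ h =>
    obtain ⟨p, q, rfl⟩ := h
    exact ⟨c • p, c • q, by simp only [map_smul, smul_add, mul_smul_comm]⟩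

theorem pow_dvd_oddPart {k : ℕ} {g : 𝔸} (hg : (ξ : 𝔸) ^ k ∣ g) : (ξ : 𝔸) ^ k ∣ oddPart K N j g := by
  rw [← (xyBasis K N j).sum_repr g] at hg ⊢
  rw [map_sum]
  refine Finset.dvd_sum fun d _ => ?_
  rcases lt_or_ge (d : ℕ) k with hdk | hdk
  · rw [coeff_eq_zero_of_pow_dvd_sum (c := (xyBasis K N j).repr g) (isNilpotent_truncX K N)
      Fin.val_injective
      (fun d => pow_succ_dvd_xyMonomial_sub K N j d) (by simpa [xyBasis_apply] using hg)
      (Finset.mem_univ d) hdk ((truncX_pow_eq_zero_iff K N).not.mpr (not_le.mpr d.isLt)),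
      zero_smul, map_zero]
    exact dvd_zero _
  · rw [map_smul, xyBasis_apply, oddPart_xyMonomial]
    refine dvd_smul_of_dvd _ ?_
    split_ifs
    · exact (pow_dvd_pow _ hdk).trans
        (pow_dvd_of_pow_succ_dvd_sub (pow_succ_dvd_xyMonomial_sub K N j d))
    · exact dvd_zero _

theorem pow_succ_dvd_oddPart_sub {k : ℕ} (hk : Odd k) {g : 𝔸} (hg : (ξ : 𝔸) ^ (k + 1) ∣ g - ξ ^ k) :
    (ξ : 𝔸) ^ (k + 1) ∣ oddPart K N j g - ξ ^ k := by
  obtain ⟨m, rfl⟩ := hk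
  have hξ := pow_succ_dvd_xyMonomial_sub K N j (2 * m + 1)
  have : oddPart K N j g - ξ ^ (2 * m + 1) = oddPart K N j (g - ξ ^ (2 * m + 1))
      - oddPart K N j (xyMonomial K N j (2 * m + 1) - ξ ^ (2 * m + 1))
      + (xyMonomial K N j (2 * m + 1) - ξ ^ (2 * m + 1)) := by
    rw [map_sub, map_sub, oddPart_xyMonomial, if_pos (by simp)]
    ring
  rw [this]
  exact dvd_add (dvd_sub (pow_dvd_oddPart K N j hg) (pow_dvd_oddPart K N j hξ)) hξ

theorem oddPart_sq [CharP 𝔸 2] (g : 𝔸) :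
    oddPart K N j (g ^ 2) = oddPart K N j (ξ ^ (2 * j + 1) * oddPart K N j g ^ 2) := by
  obtain ⟨p, q, rfl⟩ := exists_eq_aeval_add K N j g
  set y : 𝔸 := η with hy_def
  have hy : y = ξ ^ 2 + ξ ^ (2 * j + 3) := by simp only [hy_def, map_add, map_pow]
  have hsq : (aeval y p + ξ * aeval y q) ^ 2
      = aeval y (p ^ 2 + X * q ^ 2) + ξ ^ (2 * j + 1) * (ξ * aeval y q) ^ 2 := by
    simp only [CharTwo.add_sq, map_add, map_mul, map_pow, aeval_X]
    linear_combination (-aeval y q ^ 2) * hy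
      - (ξ ^ (2 * j + 3) * aeval y q ^ 2) * CharTwo.two_eq_zero (R := 𝔸)
  rw [hsq, oddPart_aeval_add, LinearMap.map_add, oddPart_aeval, zero_add]

/-- The order of `oddPart (ξ ^ (2 ^ a * s))` for odd `s`, by the recursion behind `oddPart_sq`. -/
def oddPartOrd (s : ℕ) : ℕ → ℕ
  | 0 => s
  | a + 1 => 2 * oddPartOrd s a + (2 * j + 1)

theorem oddPartOrd_add (s a : ℕ) : oddPartOrd j s a + (2 * j + 1) = 2 ^ a * (s + 2 * j + 1) := by
  induction a with
  | zero => simp [oddPartOrd]; ring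
  | succ a ih => rw [oddPartOrd, _root_.pow_succ]; linarith

theorem le_oddPartOrd (s a : ℕ) : s ≤ oddPartOrd j s a := by
  induction a with
  | zero => rfl
  | succ a ih => rw [oddPartOrd]; omega

theorem oddPartOrd_strictMono (a : ℕ) : StrictMono fun s => oddPartOrd j s a := by
  induction a with
  | zero => exact strictMono_id
  | succ a ih =>
    intro s t hst
    have := ih hst
    simp only [oddPartOrd] at this ⊢
    omega

theorem pow_succ_dvd_oddPart_pow_sub [CharP 𝔸 2] {s : ℕ} (hs : Odd s) (a : ℕ) :
    (ξ : 𝔸) ^ (oddPartOrd j s a + 1) ∣ oddPart K N j (ξ ^ (2 ^ a * s)) - ξ ^ oddPartOrd j s a := by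
  induction a with
  | zero => simpa [oddPartOrd] using pow_succ_dvd_oddPart_sub K N j hs (g := ξ ^ s) (by simp)
  | succ a ih =>
    set w := oddPartOrd j s a
    obtain ⟨z, hz⟩ := ih
    have hsq : (ξ : 𝔸) ^ (2 * j + 1) * oddPart K N j (ξ ^ (2 ^ a * s)) ^ 2
        - ξ ^ (2 * w + (2 * j + 1)) = ξ ^ (2 * w + (2 * j + 1) + 1) * (ξ * z ^ 2) := by
      rw [eq_add_of_sub_eq' hz, CharTwo.add_sq]
      ring
    rw [oddPartOrd, show 2 ^ (a + 1) * s = 2 ^ a * s * 2 by ring, pow_mul, oddPart_sq]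
    exact pow_succ_dvd_oddPart_sub K N j (by simp [parity_simps]) (hsq ▸ dvd_mul_right _ _)

theorem oddPart_truncX_pow_eq_zero [CharP 𝔸 2] {s a : ℕ} (hs : Odd s) (h : N ≤ oddPartOrd j s a) :
    oddPart K N j ((ξ : 𝔸) ^ (2 ^ a * s)) = 0 := by
  obtain ⟨z, hz⟩ := pow_succ_dvd_oddPart_pow_sub K N j hs a
  rwa [(truncX_pow_eq_zero_iff K N).mpr h,
    (truncX_pow_eq_zero_iff K N (d := oddPartOrd j s a + 1)).mpr (by omega), zero_mul,
    sub_zero] at hz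

theorem coeff_eq_zero_of_oddPart_sum_eq_zero [CharP 𝔸 2] {a : ℕ} {t : Finset ℕ} {c : ℕ → K}
    (h : oddPart K N j (∑ k ∈ t, c k • (ξ : 𝔸) ^ (2 ^ a * (2 * k + 1))) = 0) {k : ℕ} (hk : k ∈ t)
    (hkN : oddPartOrd j (2 * k + 1) a < N) : c k = 0 := by
  have he : Function.Injective fun k => oddPartOrd j (2 * k + 1) a :=
    (oddPartOrd_strictMono j a).injective.comp fun k₁ k₂ h => by omega
  rw [map_sum] at h
  simp only [map_smul] at h
  exact coeff_eq_zero_of_pow_dvd_sum (isNilpotent_truncX K N) he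
    (fun k => pow_succ_dvd_oddPart_pow_sub K N j (by simp [parity_simps]) a) (h ▸ dvd_zero (ξ ^ N))
    hk hkN ((truncX_pow_eq_zero_iff K N).not.mpr (not_le.mpr hkN))

end Truncated

section Kuelshammer

variable (K : Type*) [Field K] (n j : ℕ)

local notation "𝔸" => K[X] ⧸ Ideal.span {(X : K[X]) ^ (2 * n)}
local notation "ξ" => Ideal.Quotient.mk (Ideal.span {(X : K[X]) ^ (2 * n)}) X
local notation "η" =>
  Ideal.Quotient.mk (Ideal.span {(X : K[X]) ^ (2 * n)}) (X ^ 2 + X ^ (2 * j + 3))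

noncomputable def truncXOddSpan : Submodule K 𝔸 :=
  Submodule.span K {x | ∃ k : ℕ, k ≤ n - 1 ∧
    x = Ideal.Quotient.mk (Ideal.span {(X : K[X]) ^ (2 * n)}) (X ^ (2 * k + 1))}

noncomputable def truncYSpan : Submodule K 𝔸 :=
  Submodule.span K {y | ∃ m : ℕ, 1 ≤ m ∧ m ≤ n - 1 ∧ y = (η : 𝔸) ^ m}

theorem truncY_pow_mem_truncYSpan {m : ℕ} (hm : 1 ≤ m) : (η : 𝔸) ^ m ∈ truncYSpan K n j := by
  by_cases hmn : m ≤ n - 1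
  · exact Submodule.subset_span ⟨m, hm, hmn, rfl⟩
  · rw [← xyMonomial_two_mul, xyMonomial_eq_zero K _ j (by omega)]
    exact Submodule.zero_mem _

theorem truncY_mul_aeval_mem_truncYSpan (p : K[X]) : (η : 𝔸) * aeval η p ∈ truncYSpan K n j := by
  rw [aeval_eq_sum_range, Finset.mul_sum]
  refine Submodule.sum_mem _ fun m _ => ?_
  rw [mul_smul_comm, ← _root_.pow_succ']
  exact Submodule.smul_mem _ _ (truncY_pow_mem_truncYSpan K n j (by omega))

theorem aeval_mem_truncYSpan {p : K[X]} (hξ : ξ ∣ aeval (η : 𝔸) p) :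
    aeval (η : 𝔸) p ∈ truncYSpan K n j := by
  have hsplit : aeval (η : 𝔸) p = algebraMap K 𝔸 (p.coeff 0) + η * aeval η p.divX := by
    conv_lhs => rw [← X_mul_divX_add p]
    rw [map_add, map_mul, aeval_X, aeval_C, add_comm]
  by_cases h0 : p.coeff 0 = 0
  · rw [hsplit, h0, map_zero, zero_add]
    exact truncY_mul_aeval_mem_truncYSpan K n j _
  · have hunit : (ξ : 𝔸) ∣ algebraMap K 𝔸 (p.coeff 0) := by
      rw [hsplit] at hξ
      exact (dvd_add_left (dvd_mul_of_dvd_left (truncX_dvd_truncY K _ j) _)).mp hξ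
    -- a nilpotent element dividing a unit forces `𝔸 = 0`
    have h10 : (1 : 𝔸) = 0 := by
      simpa using (isNilpotent_truncX K _).pow_eq_zero_of_pow_succ_dvd (m := 0)
        (by simpa using hunit.trans ((IsUnit.mk0 _ h0).map (algebraMap K 𝔸)).dvd)
    rw [← one_mul (aeval _ p), h10, zero_mul]
    exact Submodule.zero_mem _

theorem mem_truncYSpan_iff (g : 𝔸) :
    g ∈ truncYSpan K n j ↔ oddPart K (2 * n) j g = 0 ∧ ξ ∣ g := by
  constructor
  · intro hg
    suffices truncYSpan K n j ≤
        LinearMap.ker (oddPart K (2 * n) j) ⊓ (Ideal.span {ξ}).restrictScalars K from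
      ⟨(this hg).1, Ideal.mem_span_singleton.mp (this hg).2⟩
    rw [truncYSpan, Submodule.span_le]
    rintro _ ⟨m, hm, -, rfl⟩
    refine ⟨oddPart_truncY_pow K _ j m, Ideal.mem_span_singleton.mpr ?_⟩
    exact (truncX_dvd_truncY K _ j).trans (dvd_pow_self _ (by omega))
  · rintro ⟨hodd, hξ⟩
    obtain ⟨p, q, rfl⟩ := exists_eq_aeval_add K _ j g
    rw [oddPart_aeval_add] at hodd
    rw [hodd, add_zero] at hξ ⊢
    exact aeval_mem_truncYSpan K n j hξ

theorem mem_truncXOddSpan_iff (hn : 1 ≤ n) (f : 𝔸) :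
    f ∈ truncXOddSpan K n ↔ ∃ c : ℕ → K, ∑ k ∈ Finset.range n, c k • (ξ : 𝔸) ^ (2 * k + 1) = f := by
  have hset : {x | ∃ k : ℕ, k ≤ n - 1 ∧
      x = Ideal.Quotient.mk (Ideal.span {(X : K[X]) ^ (2 * n)}) (X ^ (2 * k + 1))}
      = (fun k => (ξ : 𝔸) ^ (2 * k + 1)) '' ↑(Finset.range n) := by
    ext x
    simp only [Set.mem_ofPred_eq, Set.mem_image, Finset.coe_range, Set.mem_Iio, map_pow]
    exact exists_congr fun k =>
      ⟨fun ⟨hk, h⟩ => ⟨by omega, h.symm⟩, fun ⟨hk, h⟩ => ⟨by omega, h.symm⟩⟩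
  rw [truncXOddSpan, hset, Submodule.mem_span_image_finset_iff_exists_fun']

theorem coeff_eq_zero_of_pow_two_pow_mem [CharP K 2] (hn : 1 ≤ n) {i : ℕ} {c : ℕ → K}
    (h : (∑ k ∈ Finset.range n, c k • (ξ : 𝔸) ^ (2 * k + 1)) ^ 2 ^ i ∈ truncYSpan K n j) {k : ℕ}
    (hk : k ∈ Finset.range n) (hkn : oddPartOrd j (2 * k + 1) i < 2 * n) : c k = 0 := by
  have := charP_trunc K (2 * n) (by omega)
  have hfrob : (∑ k ∈ Finset.range n, c k • (ξ : 𝔸) ^ (2 * k + 1)) ^ 2 ^ i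
      = ∑ k ∈ Finset.range n, c k ^ 2 ^ i • (ξ : 𝔸) ^ (2 ^ i * (2 * k + 1)) := by
    simp only [sum_pow_char_pow, _root_.smul_pow, ← pow_mul, mul_comm (2 ^ i)]
  rw [hfrob, mem_truncYSpan_iff] at h
  exact pow_eq_zero_iff (pow_ne_zero i two_ne_zero) |>.mp
    (coeff_eq_zero_of_oddPart_sum_eq_zero K _ j h.1 hk hkn)

theorem eq_span_truncX_odd_pow_of_mem_iff [CharP K 2] (hn : 1 ≤ n) {i c : ℕ}
    (hc : ∀ k, oddPartOrd j (2 * k + 1) i < 2 * n ↔ k < c) (W : Submodule K 𝔸)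
    (hW : ∀ f, f ∈ W ↔ f ∈ truncXOddSpan K n ∧ f ^ 2 ^ i ∈ truncYSpan K n j) :
    W = Submodule.span K (Set.range fun k : Finset.Ico c n => (ξ : 𝔸) ^ (2 * (k : ℕ) + 1)) := by
  have := charP_trunc K (2 * n) (by omega)
  apply le_antisymm
  · intro f hf
    obtain ⟨hV, hU⟩ := (hW f).mp hf
    obtain ⟨a, rfl⟩ := (mem_truncXOddSpan_iff K n hn f).mp hV
    have hsum : ∑ k ∈ Finset.Ico c n, a k • (ξ : 𝔸) ^ (2 * k + 1)
        = ∑ k ∈ Finset.range n, a k • (ξ : 𝔸) ^ (2 * k + 1) := by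
      refine Finset.sum_subset (fun k hk => Finset.mem_range.mpr (Finset.mem_Ico.mp hk).2)
        fun k hk hk' => ?_
      rw [coeff_eq_zero_of_pow_two_pow_mem K n j hn hU hk
        ((hc k).mpr (by simp only [Finset.mem_Ico, Finset.mem_range] at hk hk'; omega)), zero_smul]
    rw [← hsum]
    exact Submodule.sum_mem _ fun k hk =>
      Submodule.smul_mem _ _ (Submodule.subset_span ⟨⟨k, hk⟩, rfl⟩)
  · rw [Submodule.span_le]
    rintro _ ⟨⟨k, hk⟩, rfl⟩
    obtain ⟨hck, hkn⟩ := Finset.mem_Ico.mp hk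
    have hodd : oddPart K (2 * n) j (((ξ : 𝔸) ^ (2 * k + 1)) ^ 2 ^ i) = 0 := by
      rw [← pow_mul, mul_comm (2 * k + 1)]
      exact oddPart_truncX_pow_eq_zero K _ j (by simp) (not_lt.mp ((hc k).not.mpr (by omega)))
    refine (hW _).mpr ⟨Submodule.subset_span ⟨k, by omega, (map_pow _ _ _).symm⟩,
      (mem_truncYSpan_iff K n j _).mpr ⟨hodd, ?_⟩⟩
    exact dvd_pow (dvd_pow_self _ (by omega)) (pow_ne_zero i two_ne_zero)

theorem finrank_span_truncX_odd_pow (c : ℕ) :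
    finrank K (Submodule.span K (Set.range fun k : Finset.Ico c n => (ξ : 𝔸) ^ (2 * (k : ℕ) + 1)))
      = n - c := by
  rw [finrank_span_eq_card, Fintype.card_coe, Nat.card_Ico]
  exact linearIndependent_of_pow_succ_dvd_sub (isNilpotent_truncX K _)
    (e := fun k : Finset.Ico c n => 2 * (k : ℕ) + 1) (fun k l h => Subtype.ext (by simpa using h))
    (fun _ => by simp) fun k => (truncX_pow_eq_zero_iff K _).not.mpr (by
      have := (Finset.mem_Ico.mp k.2).2; omega)

end Kuelshammer

theorem oddPartOrd_lt_iff (n j i k : ℕ) : oddPartOrd j (2 * k + 1) i < 2 * n ↔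
    (k : ℤ) < ⌈((2 * n : ℚ) - (2 ^ (i + 1) - 2) * j - (2 ^ (i + 1) - 1)) / 2 ^ (i + 1)⌉ := by
  have hq : (oddPartOrd j (2 * k + 1) i : ℚ) = 2 ^ i * (2 * k + 2 * j + 2) - (2 * j + 1) := by
    rw [eq_sub_iff_add_eq]
    exact_mod_cast (oddPartOrd_add j (2 * k + 1) i).trans (by ring)
  rw [Int.lt_ceil, lt_div_iff₀ (by positivity), ← Nat.cast_lt (α := ℚ), hq, _root_.pow_succ]
  push_cast
  constructor <;> intro <;> linarith

theorem kuelshammer_dim_general (n j i : ℕ) (hn : 1 ≤ n)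
    (W : Submodule (ZMod 2)
      (Polynomial (ZMod 2) ⧸ Ideal.span {(Polynomial.X : Polynomial (ZMod 2)) ^ (2 * n)}))
    (hW : ∀ f, f ∈ W ↔
      (f ∈ Submodule.span (ZMod 2)
        {x | ∃ k : ℕ, k ≤ n - 1 ∧
          x = Ideal.Quotient.mk
                (Ideal.span {(Polynomial.X : Polynomial (ZMod 2)) ^ (2 * n)})
                (Polynomial.X ^ (2 * k + 1))} ∧
        f ^ (2 ^ i) ∈ Submodule.span (ZMod 2)
        {y | ∃ m : ℕ, 1 ≤ m ∧ m ≤ n - 1 ∧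
          y = (Ideal.Quotient.mk
                (Ideal.span {(Polynomial.X : Polynomial (ZMod 2)) ^ (2 * n)})
                (Polynomial.X ^ 2 + Polynomial.X ^ (2 * j + 3))) ^ m})) :
    (Module.finrank (ZMod 2) W : ℤ) =
      (n : ℤ) - max
        ⌈((2 * n : ℚ) - (2 ^ (i + 1) - 2) * j - (2 ^ (i + 1) - 1)) / 2 ^ (i + 1)⌉ 0 := by
  set c := (⌈((2 * n : ℚ) - (2 ^ (i + 1) - 2) * j - (2 ^ (i + 1) - 1)) / 2 ^ (i + 1)⌉).toNat
  have hc : ∀ k, oddPartOrd j (2 * k + 1) i < 2 * n ↔ k < c := fun k =>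
    (oddPartOrd_lt_iff n j i k).trans Int.lt_toNat.symm
  have hcn : c ≤ n := by
    by_contra h
    have := (hc n).mpr (by omega)
    have := le_oddPartOrd j (2 * n + 1) i
    omega
  rw [eq_span_truncX_odd_pow_of_mem_iff (ZMod 2) n j hn hc W hW, finrank_span_truncX_odd_pow,
    Nat.cast_sub hcn, Int.toNat_eq_max]

theorem kuelshammer_dim (n j i : ℕ) (hn : 1 ≤ n) (hi : 1 ≤ i)
    (W : Submodule (ZMod 2)
      (Polynomial (ZMod 2) ⧸ Ideal.span {(Polynomial.X : Polynomial (ZMod 2)) ^ (2 * n)}))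
    (hW : ∀ f, f ∈ W ↔
      (f ∈ Submodule.span (ZMod 2)
        {x | ∃ k : ℕ, k ≤ n - 1 ∧
          x = Ideal.Quotient.mk
                (Ideal.span {(Polynomial.X : Polynomial (ZMod 2)) ^ (2 * n)})
                (Polynomial.X ^ (2 * k + 1))} ∧
        f ^ (2 ^ i) ∈ Submodule.span (ZMod 2)
        {y | ∃ m : ℕ, 1 ≤ m ∧ m ≤ n - 1 ∧
          y = (Ideal.Quotient.mk
                (Ideal.span {(Polynomial.X : Polynomial (ZMod 2)) ^ (2 * n)})
                (Polynomial.X ^ 2 + Polynomial.X ^ (2 * j + 3))) ^ m})) :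
    (Module.finrank (ZMod 2) W : ℤ) =
      (n : ℤ) - max
        ⌈((2 * n : ℚ) - (2 ^ (i + 1) - 2) * j - (2 ^ (i + 1) - 1)) / 2 ^ (i + 1)⌉ 0 :=
  kuelshammer_dim_general n j i hn W hW
end

section
/- Let A be an associative ring of prime characteristic p and let [A,A] denote the additive subgroup generated by all commutators ab − ba. Then for all x, y ∈ A one has (x + y)^p ≡ x^p + y^p modulo [A,A]. -/
/-!
Expanding `(x + y) ^ p` gives the sum of all `2 ^ p` words of length `p` in `x` and `y`. Modulo
`[A, A]` a word may be rotated cyclically, so the cyclic group of order `p` acts on the words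
preserving their classes. A non-constant word lies in an orbit of size `p`, which contributes `p`
times a single class, that is zero; only the constant words `x ^ p` and `y ^ p` survive.
-/

open Finset MulAction

theorem add_pow_eq_sum_ofFn_prod {A : Type*} [Semiring A] (x y : A) (n : ℕ) :
    (x + y) ^ n = ∑ w : Fin n → Bool, (List.ofFn fun i => cond (w i) x y).prod := by
  have hxy : x + y = ∑ b : Bool, cond b x y := by simp
  have := (MultilinearMap.mkPiAlgebraFin ℕ n A).map_sum fun (_ : Fin n) (b : Bool) => cond b x y
  simpa [← hxy, List.ofFn_const] using this

theorem List.ofFn_add_eq_rotate {α : Type*} {n : ℕ} [NeZero n] (v : Fin n → α) (c : Fin n) :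
    List.ofFn (fun i => v (c + i)) = (List.ofFn v).rotate c := by
  apply List.ext_getElem (by simp)
  intro k _ _
  simp only [List.getElem_ofFn, List.getElem_rotate, List.length_ofFn]
  congr 1
  ext
  simp [Fin.val_add, Nat.add_comm]

theorem List.apply_prod_rotate {M β : Type*} [Monoid M] (q : M → β)
    (hq : ∀ a b, q (a * b) = q (b * a)) (l : List M) (n : ℕ) :
    q (l.rotate n).prod = q l.prod := by
  rw [List.rotate_eq_drop_append_take_mod, List.prod_append, hq, List.prod_take_mul_prod_drop]

theorem IsPGroup.sum_eq_sum_fixedPoints {p : ℕ} [Fact p.Prime] {G α M : Type*} [Group G]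
    [MulAction G α] [Fintype α] [AddCommMonoid M] (hG : IsPGroup p G) (f : α → M)
    (hf : ∀ (g : G) a, f (g • a) = f a) (hp : ∀ a, p • f a = 0)
    [DecidablePred (· ∈ fixedPoints G α)] :
    ∑ a, f a = ∑ a with a ∈ fixedPoints G α, f a := by
  classical
  suffices ∑ a with a ∉ fixedPoints G α, f a = 0 by
    rw [← sum_filter_add_sum_filter_not univ (· ∈ fixedPoints G α), this, add_zero]
  refine sum_cancels_of_partition_cancels (orbitRel G α) fun x hx => ?_
  have hx : x ∉ fixedPoints G α := (mem_filter.mp hx).2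
  have horbit : ∀ a, a ∉ fixedPoints G α ∧ orbitRel G α a x ↔ a ∈ orbit G x := by
    refine fun a => ⟨fun h => orbitRel_apply.mp h.2, fun ha => ⟨?_, orbitRel_apply.mpr ha⟩⟩
    obtain ⟨g, rfl⟩ := ha
    intro hfix
    have hgx : g • x = x := by simpa using (hfix g⁻¹).symm
    exact hx (hgx ▸ hfix)
  obtain ⟨k, hk⟩ := hG.card_orbit x
  have hk0 : k ≠ 0 := by
    rintro rfl
    refine hx (mem_fixedPoints_iff_card_orbit_eq_one.mpr ?_)
    simpa [Nat.card_eq_fintype_card] using hk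
  have hcard : #{a | a ∈ orbit G x} = p ^ k := by
    rw [← hk, Nat.card_eq_fintype_card, Fintype.card_subtype]
  have hconst : ∀ a ∈ ({a | a ∈ orbit G x} : Finset α), f a = f x := fun a ha => by
    obtain ⟨g, rfl⟩ := (mem_filter.mp ha).2
    exact hf g x
  rw [filter_filter, filter_congr fun a _ => horbit a, sum_congr rfl hconst, sum_const, hcard,
    ← Nat.succ_pred hk0, pow_succ', mul_nsmul, hp, nsmul_zero]

section Rotation

attribute [local instance] arrowAction

variable {n : ℕ} [NeZero n]

theorem rotation_smul_apply {β : Type*} (g : Multiplicative (Fin n)) (w : Fin n → β)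
    (i : Fin n) :
    (g • w) i = w (-g.toAdd + i) := rfl

theorem mem_fixedPoints_rotation_iff {β : Type*} {w : Fin n → β} :
    w ∈ fixedPoints (Multiplicative (Fin n)) (Fin n → β) ↔ ∃ b, w = fun _ => b := by
  refine ⟨fun hw => ⟨w 0, funext fun i => ?_⟩, ?_⟩
  · simpa [rotation_smul_apply] using congrFun (hw (.ofAdd (-i))) 0
  · rintro ⟨b, rfl⟩ g
    rfl

theorem apply_prod_ofFn_rotation_smul {M β : Type*} [Monoid M] (q : M → β)
    (hq : ∀ a b, q (a * b) = q (b * a)) (g : Multiplicative (Fin n)) (v : Fin n → M) :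
    q (List.ofFn (g • v)).prod = q (List.ofFn v).prod :=
  (congrArg (fun l => q l.prod) (List.ofFn_add_eq_rotate v _)).trans
    (List.apply_prod_rotate q hq _ _)

theorem sum_fixedPoints_rotation {M : Type*} [AddCommMonoid M] (f : (Fin n → Bool) → M)
    [DecidablePred (· ∈ fixedPoints (Multiplicative (Fin n)) (Fin n → Bool))] :
    ∑ w with w ∈ fixedPoints (Multiplicative (Fin n)) (Fin n → Bool), f w =
      f (fun _ => true) + f (fun _ => false) := by
  have hne : (fun _ : Fin n => true) ≠ fun _ => false := fun h => by simpa using congrFun h 0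
  rw [← sum_pair hne]
  congr 1
  ext w
  simp only [mem_filter, mem_univ, true_and, mem_fixedPoints_rotation_iff, mem_insert,
    mem_singleton]
  constructor
  · rintro ⟨_ | _, rfl⟩ <;> simp
  · rintro (rfl | rfl) <;> exact ⟨_, rfl⟩

theorem AddMonoidHom.map_add_pow_char_of_map_mul_comm {A Q : Type*} [Ring A] [AddCommGroup Q]
    (p : ℕ) [Fact p.Prime] [CharP A p] (q : A →+ Q) (hq : ∀ a b, q (a * b) = q (b * a))
    (x y : A) :
    q ((x + y) ^ p) = q (x ^ p) + q (y ^ p) := by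
  classical
  have hG : IsPGroup p (Multiplicative (Fin p)) := IsPGroup.of_card (n := 1) (by simp)
  have hp : ∀ a, p • q a = 0 := fun a => by
    rw [← map_nsmul, nsmul_eq_mul, CharP.cast_eq_zero, zero_mul, map_zero]
  rw [add_pow_eq_sum_ofFn_prod, map_sum,
    hG.sum_eq_sum_fixedPoints _
      (fun g w => apply_prod_ofFn_rotation_smul q hq g fun i => cond (w i) x y) (fun _ => hp _),
    sum_fixedPoints_rotation]
  simp [List.ofFn_const]

end Rotation

theorem frobenius_additive_mod_commutators (A : Type*) [Ring A] (p : ℕ)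
    [Fact p.Prime] [CharP A p] (x y : A) :
    (x + y) ^ p - (x ^ p + y ^ p) ∈
      AddSubgroup.closure {z : A | ∃ a b : A, z = a * b - b * a} := by
  set C := AddSubgroup.closure {z : A | ∃ a b : A, z = a * b - b * a}
  have hq (a b : A) : QuotientAddGroup.mk' C (a * b) = QuotientAddGroup.mk' C (b * a) :=
    QuotientAddGroup.eq_iff_sub_mem.mpr (AddSubgroup.subset_closure ⟨a, b, rfl⟩)
  rw [← QuotientAddGroup.eq_zero_iff, ← QuotientAddGroup.mk'_apply, map_sub, map_add,
    AddMonoidHom.map_add_pow_char_of_map_mul_comm p _ hq, sub_self]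
end
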